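/- arXiv:1605.06498 — 3 statements merged into one kernel-verified Lean document; each statement's English description precedes it below -/
import Mathlib

section
/- Let F be an n×n skew-symmetric complex matrix and let W = exp(-½ θᵀFθ) ∈ Λ, where θᵀFθ = Σᵢⱼ Fᵢⱼθᵢθⱼ and exp is the (finite) Taylor series in the Grassmann algebra Λ on θ₁,…,θₙ. Then for every i, (∂ᵢ + Σⱼ Fᵢⱼθⱼ) W = 0. -/
noncomputable section

/-- The Grassmann algebra over ℂ on `n` generators, modeled as the exterior algebra. -/
abbrev Gr (n : ℕ) := ExteriorAlgebra ℂ (Fin n → ℂ)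

/-- The `i`-th Grassmann generator. -/
def θ (n : ℕ) (i : Fin n) : Gr n := ExteriorAlgebra.ι ℂ (Pi.single i 1)

/-- Left multiplication by the `i`-th generator, as an operator. -/
def mulθ (n : ℕ) (i : Fin n) : Module.End ℂ (Gr n) := LinearMap.mulLeft ℂ (θ n i)

/-- The left Grassmann derivative `∂ᵢ`, modeled as interior multiplication (left contraction)
by the dual basis vector. -/
def pd (n : ℕ) (i : Fin n) : Module.End ℂ (Gr n) :=
  CliffordAlgebra.contractLeft (Q := (0 : QuadraticForm ℂ (Fin n → ℂ))) (LinearMap.proj i)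

/-- The (finite) exponential series in the Grassmann algebra; for a nilpotent element with
zero constant term this coincides with the full Taylor series, since `x ^ (n+1) = 0`. -/
def gexp (n : ℕ) (x : Gr n) : Gr n := ∑ k ∈ Finset.range (n + 1), (k.factorial : ℂ)⁻¹ • x ^ k

/-- The operator `dᵢ = ∂ᵢ + Σⱼ Fᵢⱼ θⱼ` associated to a matrix `F`. -/
def dF (n : ℕ) (F : Matrix (Fin n) (Fin n) ℂ) (i : Fin n) : Module.End ℂ (Gr n) :=
  pd n i + ∑ j, F i j • mulθ n j

end

noncomputable section GaussAux

variable {n : ℕ}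

/-- abbreviation for the quadratic Gaussian element -/
def Sel (n : ℕ) (F : Matrix (Fin n) (Fin n) ℂ) : Gr n :=
  -(1/2 : ℂ) • ∑ i, ∑ j, F i j • (θ n i * θ n j)

/-- abbreviation for `Σⱼ Fᵢⱼ θⱼ` -/
def Ael (n : ℕ) (F : Matrix (Fin n) (Fin n) ℂ) (i : Fin n) : Gr n :=
  ∑ j, F i j • θ n j

lemma pd_one (i : Fin n) : pd n i (1 : Gr n) = 0 := by
  simpa [pd] using CliffordAlgebra.contractLeft_one (Q := (0 : QuadraticForm ℂ (Fin n → ℂ)))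
    (d := LinearMap.proj i)

lemma pd_mulθ (i j : Fin n) (x : Gr n) :
    pd n i (θ n j * x) = ((Pi.single j 1 : Fin n → ℂ) i) • x - θ n j * pd n i x := by
  have := CliffordAlgebra.contractLeft_ι_mul (Q := (0 : QuadraticForm ℂ (Fin n → ℂ)))
    (d := LinearMap.proj i) (Pi.single j 1) x
  simpa [pd, θ] using this

lemma pd_θθ (i a b : Fin n) :
    pd n i (θ n a * θ n b)
      = ((Pi.single a 1 : Fin n → ℂ) i) • θ n b - ((Pi.single b 1 : Fin n → ℂ) i) • θ n a := by
  have h1 : θ n a * θ n b = θ n a * (θ n b * 1) := by rw [mul_one]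
  rw [h1, pd_mulθ, pd_mulθ, pd_one, mul_one, mul_zero, sub_zero, mul_smul_comm, mul_one]

lemma pd_θθ_mul (i a b : Fin n) (x : Gr n) :
    pd n i (θ n a * θ n b * x)
      = pd n i (θ n a * θ n b) * x + (θ n a * θ n b) * pd n i x := by
  rw [pd_θθ, mul_assoc, pd_mulθ, pd_mulθ, sub_mul, smul_mul_assoc, smul_mul_assoc,
    mul_sub, mul_smul_comm, mul_assoc]
  abel

lemma pd_Sel_mul (F : Matrix (Fin n) (Fin n) ℂ) (i : Fin n) (x : Gr n) :
    pd n i (Sel n F * x) = pd n i (Sel n F) * x + Sel n F * pd n i x := by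
  rw [Sel, smul_mul_assoc, map_smul, map_smul, smul_mul_assoc, smul_mul_assoc, ← smul_add]
  congr 1
  simp only [Finset.sum_mul, map_sum, smul_mul_assoc, map_smul]
  rw [← Finset.sum_add_distrib]
  refine Finset.sum_congr rfl fun a _ => ?_
  rw [← Finset.sum_add_distrib]
  refine Finset.sum_congr rfl fun b _ => ?_
  rw [← smul_add]
  congr 1
  exact pd_θθ_mul i a b x

lemma θ_comm_θθ (j a b : Fin n) : θ n j * (θ n a * θ n b) = (θ n a * θ n b) * θ n j := by
  have h1 : ∀ p q : Fin n, θ n p * θ n q = -(θ n q * θ n p) := fun p q =>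
    eq_neg_of_add_eq_zero_left (ExteriorAlgebra.ι_add_mul_swap _ _)
  rw [← mul_assoc, h1 j a, neg_mul, mul_assoc, h1 j b, mul_neg, neg_neg, mul_assoc]

lemma θ_comm_Sel (F : Matrix (Fin n) (Fin n) ℂ) (j : Fin n) :
    θ n j * Sel n F = Sel n F * θ n j := by
  rw [Sel, mul_smul_comm, smul_mul_assoc]
  congr 1
  rw [Finset.mul_sum, Finset.sum_mul]
  refine Finset.sum_congr rfl fun a _ => ?_
  rw [Finset.mul_sum, Finset.sum_mul]
  refine Finset.sum_congr rfl fun b _ => ?_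
  rw [mul_smul_comm, smul_mul_assoc]
  congr 1
  exact θ_comm_θθ j a b

lemma Ael_comm_Sel (F : Matrix (Fin n) (Fin n) ℂ) (i : Fin n) :
    Ael n F i * Sel n F = Sel n F * Ael n F i := by
  rw [Ael, Finset.sum_mul, Finset.mul_sum]
  refine Finset.sum_congr rfl fun j _ => ?_
  rw [smul_mul_assoc, mul_smul_comm, θ_comm_Sel]

lemma pd_Sel (F : Matrix (Fin n) (Fin n) ℂ) (hF : F.transpose = -F) (i : Fin n) :
    pd n i (Sel n F) = -Ael n F i := by
  have hFs : ∀ a : Fin n, F a i = -F i a := fun a => by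
    have := congrFun (congrFun hF i) a
    simpa [Matrix.transpose_apply] using this
  simp only [Sel, map_smul, map_sum, pd_θθ, Pi.single_apply, smul_sub, smul_smul,
    Finset.sum_sub_distrib]
  have h1 : ∀ a : Fin n, (∑ b, (F a b * if i = a then (1:ℂ) else 0) • θ n b)
      = if i = a then Ael n F i else 0 := by
    intro a
    by_cases h : i = a
    · subst h; simp [Ael]
    · simp [h]
  have h2 : ∀ a : Fin n, (∑ b, (F a b * if i = b then (1:ℂ) else 0) • θ n a)
      = F a i • θ n a := by
    intro a
    rw [← Finset.sum_smul]
    congr 1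
    simp
  simp only [h1, h2]
  rw [Finset.sum_ite_eq, if_pos (Finset.mem_univ i)]
  have h3 : (∑ a, F a i • θ n a) = -Ael n F i := by
    simp only [hFs, neg_smul, Finset.sum_neg_distrib, Ael]
  rw [h3, smul_neg, sub_neg_eq_add, ← add_smul]
  norm_num

lemma pd_Sel_pow (F : Matrix (Fin n) (Fin n) ℂ) (hF : F.transpose = -F) (i : Fin n) :
    ∀ k : ℕ, pd n i (Sel n F ^ (k+1)) = ((k+1 : ℕ) : ℂ) • (-Ael n F i * Sel n F ^ k) := by
  intro k
  induction k with
  | zero => simp [pd_Sel F hF i]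
  | succ k ih =>
    rw [pow_succ', pd_Sel_mul, ih, pd_Sel F hF i]
    rw [mul_smul_comm, neg_mul, neg_mul, mul_neg, ← mul_assoc, ← Ael_comm_Sel, mul_assoc,
      ← pow_succ', ← neg_mul]
    have hc : ((k+1+1 : ℕ) : ℂ) = ((k+1 : ℕ) : ℂ) + 1 := by push_cast; ring
    rw [hc, add_smul, one_smul]
    abel

lemma exteriorPower_top_eq_bot : ⋀[ℂ]^(n+1) (Fin n → ℂ) = ⊥ := by
  rw [← ExteriorAlgebra.ιMulti_span_fixedDegree]
  refine le_bot_iff.mp (Submodule.span_le.mpr ?_)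
  rintro x ⟨v, rfl⟩
  have hv : ¬ LinearIndependent ℂ v := fun h => by
    have := h.fintype_card_le_finrank
    simp [Module.finrank_fintype_fun_eq_card] at this
  haveI : NoZeroSMulDivisors ℂ (ExteriorAlgebra ℂ (Fin n → ℂ)) :=
    GroupWithZero.toNoZeroSMulDivisors
  simp [AlternatingMap.map_linearDependent _ v hv]

lemma Ael_mul_Sel_pow (F : Matrix (Fin n) (Fin n) ℂ) (i : Fin n) :
    Ael n F i * Sel n F ^ n = 0 := by
  set Iota : Submodule ℂ (Gr n) := LinearMap.range (ExteriorAlgebra.ι ℂ (M := Fin n → ℂ))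
  have hθ : ∀ j, θ n j ∈ Iota := fun j => ⟨Pi.single j 1, rfl⟩
  have hA : Ael n F i ∈ Iota := Submodule.sum_mem _ fun j _ => Submodule.smul_mem _ _ (hθ j)
  have hS : Sel n F ∈ Iota ^ 2 := by
    refine Submodule.smul_mem _ _ (Submodule.sum_mem _ fun a _ => Submodule.sum_mem _
      fun b _ => Submodule.smul_mem _ _ ?_)
    rw [pow_two]
    exact Submodule.mul_mem_mul (hθ a) (hθ b)
  have hSk : ∀ k : ℕ, Sel n F ^ k ∈ Iota ^ (2*k) := by
    intro k
    induction k with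
    | zero => simpa using Submodule.one_le.mp le_rfl
    | succ k ih =>
      have := Submodule.mul_mem_mul hS ih
      rw [← pow_add] at this
      have hk : 2 + 2*k = 2*(k+1) := by ring
      rw [hk] at this
      rw [pow_succ']
      exact this
  have hAS : Ael n F i * Sel n F ^ n ∈ Iota ^ (2*n+1) := by
    have := Submodule.mul_mem_mul hA (hSk n)
    rwa [← pow_succ'] at this
  have hbot : Iota ^ (2*n+1) = ⊥ := by
    have hsplit : 2*n+1 = (n+1) + n := by ring
    rw [hsplit, pow_add]
    have h1 : Iota ^ (n+1) = ⊥ := exteriorPower_top_eq_bot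
    rw [h1, Submodule.bot_mul]
  rw [hbot] at hAS
  simpa using hAS

lemma pd_gexp (F : Matrix (Fin n) (Fin n) ℂ) (hF : F.transpose = -F) (i : Fin n) :
    pd n i (gexp n (Sel n F)) + Ael n F i * gexp n (Sel n F) = 0 := by
  rw [gexp, map_sum]
  rw [Finset.sum_range_succ' (fun k => pd n i ((k.factorial : ℂ)⁻¹ • Sel n F ^ k)) n]
  simp only [map_smul, pd_Sel_pow F hF i, pow_zero, pd_one, smul_zero, add_zero]
  have hfac : ∀ k : ℕ, ((k+1).factorial : ℂ)⁻¹ • (((k+1 : ℕ) : ℂ) • (-Ael n F i * Sel n F ^ k))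
      = (k.factorial : ℂ)⁻¹ • (-Ael n F i * Sel n F ^ k) := by
    intro k
    have h1 : ((k:ℂ)+1) ≠ 0 := Nat.cast_add_one_ne_zero k
    have h2 : ((k.factorial : ℂ)) ≠ 0 := Nat.cast_ne_zero.mpr k.factorial_ne_zero
    rw [smul_smul, Nat.factorial_succ]
    congr 1
    push_cast
    field_simp
  simp only [hfac]
  rw [Finset.mul_sum, Finset.sum_range_succ (fun k => Ael n F i * ((k.factorial : ℂ)⁻¹ • Sel n F ^ k)) n]
  simp only [mul_smul_comm, neg_mul, smul_neg]
  rw [Ael_mul_Sel_pow F i, smul_zero, add_zero, ← Finset.sum_add_distrib]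
  simp

end GaussAux

/-- The Grassmann–Gaussian exponential `W = exp(-½ θᵀFθ)` is annihilated by every operator
`∂ᵢ + Σⱼ Fᵢⱼθⱼ`, for `F` skew-symmetric. -/
theorem gaussian_annihilated (n : ℕ) (F : Matrix (Fin n) (Fin n) ℂ)
    (hF : F.transpose = -F) :
    ∀ i, (pd n i) (gexp n (-(1/2 : ℂ) • ∑ i, ∑ j, F i j • (θ n i * θ n j)))
        + ∑ j, F i j • (θ n j * gexp n (-(1/2 : ℂ) • ∑ i, ∑ j, F i j • (θ n i * θ n j))) = 0 := by
  intro i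
  have key := pd_gexp F hF i
  have hA : (∑ j, F i j • (θ n j * gexp n (Sel n F))) = Ael n F i * gexp n (Sel n F) := by
    simp [Ael, Finset.sum_mul, smul_mul_assoc]
  rw [show (-(1/2 : ℂ) • ∑ i, ∑ j, F i j • (θ n i * θ n j)) = Sel n F from rfl, hA]
  exact key
end

section
/- Let F be an n×n skew-symmetric complex matrix. The simultaneous nullspace {x ∈ Λ : (∂ᵢ + Σⱼ Fᵢⱼθⱼ)x = 0 for all i} in the Grassmann algebra Λ on n generators is exactly the one-dimensional span of exp(-½ θᵀFθ). -/
noncomputable section Aux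

namespace GaussAux

variable {n : ℕ}

/-- basic: pd of ι-multiplication -/
lemma pd_iota_mul (i : Fin n) (m : Fin n → ℂ) (x : Gr n) :
    pd n i (ExteriorAlgebra.ι ℂ m * x) = m i • x - ExteriorAlgebra.ι ℂ m * pd n i x :=
  CliffordAlgebra.contractLeft_ι_mul _ _ _

lemma pd_one (i : Fin n) : pd n i (1 : Gr n) = 0 :=
  CliffordAlgebra.contractLeft_one _ _

lemma pd_algebraMap (i : Fin n) (c : ℂ) :
    pd n i (algebraMap ℂ (Gr n) c) = 0 :=
  CliffordAlgebra.contractLeft_algebraMap _ _ _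

lemma pd_iota (i : Fin n) (m : Fin n → ℂ) :
    pd n i (ExteriorAlgebra.ι ℂ m) = algebraMap ℂ (Gr n) (m i) :=
  CliffordAlgebra.contractLeft_ι _ _ _

lemma pd_theta (i j : Fin n) :
    pd n i (θ n j) = algebraMap ℂ (Gr n) (if i = j then 1 else 0) := by
  rw [θ, pd_iota, Pi.single_apply]

lemma iota_swap (a b : Fin n → ℂ) :
    ExteriorAlgebra.ι ℂ a * ExteriorAlgebra.ι ℂ b
      = -(ExteriorAlgebra.ι ℂ b * ExteriorAlgebra.ι ℂ a) :=
  eq_neg_of_add_eq_zero_left (ExteriorAlgebra.ι_add_mul_swap a b)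

/-- products of two ι's are central -/
lemma even2_comm (a b : Fin n → ℂ) (y : Gr n) :
    (ExteriorAlgebra.ι ℂ a * ExteriorAlgebra.ι ℂ b) * y
      = y * (ExteriorAlgebra.ι ℂ a * ExteriorAlgebra.ι ℂ b) := by
  induction y using CliffordAlgebra.induction with
  | algebraMap c => rw [← Algebra.commutes]
  | ι m =>
    show _ * CliffordAlgebra.ι _ m = CliffordAlgebra.ι _ m * _
    have h1 := iota_swap b m
    have h2 := iota_swap a m
    calc ExteriorAlgebra.ι ℂ a * ExteriorAlgebra.ι ℂ b * ExteriorAlgebra.ι ℂ m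
        = ExteriorAlgebra.ι ℂ a * (ExteriorAlgebra.ι ℂ b * ExteriorAlgebra.ι ℂ m) := by
          rw [mul_assoc]
      _ = -(ExteriorAlgebra.ι ℂ a * (ExteriorAlgebra.ι ℂ m * ExteriorAlgebra.ι ℂ b)) := by
          rw [h1, mul_neg]
      _ = -((ExteriorAlgebra.ι ℂ a * ExteriorAlgebra.ι ℂ m) * ExteriorAlgebra.ι ℂ b) := by
          rw [mul_assoc]
      _ = ExteriorAlgebra.ι ℂ m * ExteriorAlgebra.ι ℂ a * ExteriorAlgebra.ι ℂ b := by
          rw [h2, neg_mul, neg_neg]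
      _ = ExteriorAlgebra.ι ℂ m * (ExteriorAlgebra.ι ℂ a * ExteriorAlgebra.ι ℂ b) := by
          rw [mul_assoc]
  | mul x y hx hy =>
    calc (ExteriorAlgebra.ι ℂ a * ExteriorAlgebra.ι ℂ b) * (x * y)
        = ((ExteriorAlgebra.ι ℂ a * ExteriorAlgebra.ι ℂ b) * x) * y :=
          (mul_assoc _ x y).symm
      _ = x * ((ExteriorAlgebra.ι ℂ a * ExteriorAlgebra.ι ℂ b) * y) := by rw [hx, mul_assoc]
      _ = (x * y) * (ExteriorAlgebra.ι ℂ a * ExteriorAlgebra.ι ℂ b) := by rw [hy, mul_assoc]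
  | add x y hx hy => rw [mul_add, add_mul, hx, hy]

/-- the "even derivation" property -/
def IsNice (a : Gr n) : Prop :=
  ∀ (i : Fin n) (x : Gr n), pd n i (a * x) = pd n i a * x + a * pd n i x

lemma isNice_theta_mul_theta (s t : Fin n) : IsNice (θ n s * θ n t) := by
  intro i x
  have h1 : pd n i (θ n s * (θ n t * x))
      = (Pi.single s 1 : Fin n → ℂ) i • (θ n t * x) - θ n s * ((Pi.single t 1 : Fin n → ℂ) i • x - θ n t * pd n i x) := by
    rw [θ, θ, pd_iota_mul, pd_iota_mul]
  rw [mul_assoc, h1, θ, θ, pd_iota_mul, pd_iota, mul_sub, mul_smul_comm,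
    ← Algebra.commutes, ← Algebra.smul_def, sub_mul, smul_mul_assoc,
    smul_mul_assoc, mul_assoc]
  abel

lemma IsNice.smul {a : Gr n} (c : ℂ) (ha : IsNice a) : IsNice (c • a) := by
  intro i x
  rw [smul_mul_assoc, map_smul, ha, map_smul, smul_add, smul_mul_assoc, smul_mul_assoc]

lemma isNice_zero : IsNice (0 : Gr n) := by intro i x; simp

lemma IsNice.add {a b : Gr n} (ha : IsNice a) (hb : IsNice b) : IsNice (a + b) := by
  intro i x
  rw [add_mul, map_add, ha, hb, map_add, add_mul, add_mul]
  abel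

lemma IsNice.mul {a b : Gr n} (ha : IsNice a) (hb : IsNice b) : IsNice (a * b) := by
  intro i x
  rw [mul_assoc, ha, hb, ha i b, add_mul, mul_add, mul_assoc, mul_assoc, ← mul_assoc a b]
  abel

lemma isNice_one : IsNice (1 : Gr n) := by
  intro i x; rw [one_mul, pd_one, zero_mul, zero_add, one_mul]

lemma IsNice.pow {a : Gr n} (ha : IsNice a) : ∀ k, IsNice (a ^ k)
  | 0 => by rw [pow_zero]; exact isNice_one
  | (k+1) => by rw [pow_succ]; exact (IsNice.pow ha k).mul ha

lemma isNice_sum {s : Finset ℕ} {f : ℕ → Gr n} (hf : ∀ k ∈ s, IsNice (f k)) :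
    IsNice (∑ k ∈ s, f k) := by
  classical
  induction s using Finset.induction with
  | empty => simpa using isNice_zero
  | insert _ _ hns ih =>
    rw [Finset.sum_insert hns]
    exact (hf _ (Finset.mem_insert_self _ _)).add
      (ih fun k hk => hf k (Finset.mem_insert_of_mem hk))

end GaussAux

end Aux

noncomputable section Aux2

namespace GaussAux

variable {n : ℕ}

/-- generalized sum closure of niceness -/
lemma isNice_sum' {α : Type*} {s : Finset α} {f : α → Gr n} (hf : ∀ k ∈ s, IsNice (f k)) :
    IsNice (∑ k ∈ s, f k) := by
  classical
  induction s using Finset.induction with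
  | empty => simpa using isNice_zero
  | insert _ _ hns ih =>
    rw [Finset.sum_insert hns]
    exact (hf _ (Finset.mem_insert_self _ _)).add
      (ih fun k hk => hf k (Finset.mem_insert_of_mem hk))

variable (F : Matrix (Fin n) (Fin n) ℂ)

/-- The Gaussian exponent. -/
def Sm : Gr n := -(1/2 : ℂ) • ∑ i, ∑ j, F i j • (θ n i * θ n j)

lemma theta_theta_comm (i j : Fin n) (y : Gr n) : (θ n i * θ n j) * y = y * (θ n i * θ n j) := by
  unfold θ; exact even2_comm _ _ y

lemma Sm_comm (y : Gr n) : Sm F * y = y * Sm F := by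
  unfold Sm
  rw [smul_mul_assoc, mul_smul_comm]
  congr 1
  rw [Finset.sum_mul, Finset.mul_sum]
  refine Finset.sum_congr rfl fun i _ => ?_
  rw [Finset.sum_mul, Finset.mul_sum]
  refine Finset.sum_congr rfl fun j _ => ?_
  rw [smul_mul_assoc, mul_smul_comm, theta_theta_comm]

lemma nzsd : NoZeroSMulDivisors ℂ (Gr n) := by
  constructor
  intro c x h
  by_cases hc : c = 0
  · exact Or.inl hc
  · refine Or.inr ?_
    have := congrArg (fun y => c⁻¹ • y) h
    simpa [smul_smul, inv_mul_cancel₀ hc] using this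

lemma theta_mem (i : Fin n) :
    θ n i ∈ LinearMap.range (ExteriorAlgebra.ι ℂ : (Fin n → ℂ) →ₗ[ℂ] Gr n) ^ 1 := by
  rw [pow_one]; exact ⟨_, rfl⟩

lemma theta_theta_mem (i j : Fin n) :
    θ n i * θ n j ∈ LinearMap.range (ExteriorAlgebra.ι ℂ : (Fin n → ℂ) →ₗ[ℂ] Gr n) ^ 2 := by
  rw [sq]
  exact Submodule.mul_mem_mul ⟨_, rfl⟩ ⟨_, rfl⟩

lemma Sm_mem : Sm F ∈ LinearMap.range (ExteriorAlgebra.ι ℂ : (Fin n → ℂ) →ₗ[ℂ] Gr n) ^ 2 :=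
  Submodule.smul_mem _ _ (Submodule.sum_mem _ fun i _ =>
    Submodule.sum_mem _ fun j _ => Submodule.smul_mem _ _ (theta_theta_mem i j))

lemma Sm_pow_mem (k : ℕ) :
    Sm F ^ k ∈ LinearMap.range (ExteriorAlgebra.ι ℂ : (Fin n → ℂ) →ₗ[ℂ] Gr n) ^ (2*k) := by
  induction k with
  | zero =>
    simp only [pow_zero, Nat.mul_zero]
    exact Submodule.mem_one.mpr ⟨1, map_one _⟩
  | succ k ih =>
    have h2 := Submodule.mul_mem_mul ih (Sm_mem F)
    rw [← pow_add] at h2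
    have he : 2*k+2 = 2*(k+1) := by ring
    rw [he] at h2
    rw [pow_succ]
    exact h2

lemma exteriorPower_eq_bot (m : ℕ) (h : n + 1 ≤ m) :
    (LinearMap.range (ExteriorAlgebra.ι ℂ : (Fin n → ℂ) →ₗ[ℂ] Gr n) ^ m) = ⊥ := by
  haveI := nzsd (n := n)
  have hz : ∀ v : Fin (n+1) → (Fin n → ℂ), ExteriorAlgebra.ιMulti ℂ (n+1) v = 0 := by
    intro v
    apply AlternatingMap.map_linearDependent
    intro hv
    have hc := hv.fintype_card_le_finrank
    rw [Module.finrank_fin_fun, Fintype.card_fin] at hc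
    omega
  have hb : (LinearMap.range (ExteriorAlgebra.ι ℂ : (Fin n → ℂ) →ₗ[ℂ] Gr n) ^ (n+1)) = ⊥ := by
    show (⋀[ℂ]^(n+1) (Fin n → ℂ) : Submodule ℂ (Gr n)) = ⊥
    rw [← ExteriorAlgebra.ιMulti_span_fixedDegree, Submodule.span_eq_bot]
    rintro _ ⟨v, rfl⟩; exact hz v
  obtain ⟨e, rfl⟩ := Nat.exists_eq_add_of_le h
  rw [pow_add, hb, Submodule.bot_mul]

end GaussAux

end Aux2

noncomputable section Aux3

namespace GaussAux

variable {n : ℕ} (F : Matrix (Fin n) (Fin n) ℂ)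

lemma pd_theta_theta (i s t : Fin n) :
    pd n i (θ n s * θ n t)
      = (if i = s then (1:ℂ) else 0) • θ n t - (if i = t then (1:ℂ) else 0) • θ n s := by
  rw [θ, θ, pd_iota_mul, pd_iota, ← Algebra.commutes, ← Algebra.smul_def,
    Pi.single_apply, Pi.single_apply]

lemma isNice_Sm : IsNice (Sm F) := by
  unfold Sm
  refine IsNice.smul _ (isNice_sum' fun i _ => isNice_sum' fun j _ => ?_)
  exact (isNice_theta_mul_theta i j).smul _

lemma isNice_gexp : IsNice (gexp n (Sm F)) := by
  unfold gexp
  exact isNice_sum' fun k _ => ((isNice_Sm F).pow k).smul _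

lemma pd_Sm (hF : F.transpose = -F) (i : Fin n) :
    pd n i (Sm F) = -∑ j, F i j • θ n j := by
  have hskew : ∀ s, F s i = -F i s := fun s => by
    have := congrFun (congrFun hF i) s
    simpa [Matrix.transpose_apply] using this
  unfold Sm
  rw [map_smul, map_sum]
  have h1 : ∀ s : Fin n, pd n i (∑ j, F s j • (θ n s * θ n j))
      = ∑ j, F s j • ((if i = s then (1:ℂ) else 0) • θ n j - (if i = j then (1:ℂ) else 0) • θ n s) := by
    intro s
    rw [map_sum]
    exact Finset.sum_congr rfl fun j _ => by rw [map_smul, pd_theta_theta]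
  calc -(1/2 : ℂ) • ∑ s, pd n i (∑ j, F s j • (θ n s * θ n j))
      = -(1/2 : ℂ) • ∑ s, ∑ j, F s j •
          ((if i = s then (1:ℂ) else 0) • θ n j - (if i = j then (1:ℂ) else 0) • θ n s) := by
        rw [Finset.sum_congr rfl fun s _ => h1 s]
    _ = -(1/2 : ℂ) • ((∑ j, F i j • θ n j) - ∑ s, F s i • θ n s) := by
        congr 1
        simp only [smul_sub, Finset.sum_sub_distrib]
        congr 1
        · have e1 : ∀ x : Fin n, (∑ y, F x y • (if i = x then (1:ℂ) else 0) • θ n y)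
              = if i = x then ∑ y, F x y • θ n y else 0 := by
            intro x; split <;> simp
          rw [Finset.sum_congr rfl fun x _ => e1 x, Finset.sum_ite_eq]
          simp
        · have e2 : ∀ x : Fin n, (∑ y, F x y • (if i = y then (1:ℂ) else 0) • θ n x)
              = F x i • θ n x := by
            intro x
            have : ∀ y : Fin n, F x y • (if i = y then (1:ℂ) else 0) • θ n x
                = if i = y then F x y • θ n x else 0 := by
              intro y; split <;> simp
            rw [Finset.sum_congr rfl fun y _ => this y, Finset.sum_ite_eq]
            simp
          rw [Finset.sum_congr rfl fun x _ => e2 x]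
    _ = -∑ j, F i j • θ n j := by
        have : (∑ s, F s i • θ n s) = -∑ j, F i j • θ n j := by
          rw [← Finset.sum_neg_distrib]
          exact Finset.sum_congr rfl fun s _ => by rw [hskew s, neg_smul]
        rw [this, sub_neg_eq_add, ← two_smul ℂ, smul_smul]
        norm_num

end GaussAux

end Aux3

noncomputable section Aux4

namespace GaussAux

variable {n : ℕ} (F : Matrix (Fin n) (Fin n) ℂ)

lemma pd_Sm_pow (i : Fin n) : ∀ k : ℕ,
    pd n i (Sm F ^ (k+1)) = ((k:ℂ)+1) • (pd n i (Sm F) * Sm F ^ k)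
  | 0 => by simp [pow_one]
  | (k+1) => by
    rw [pow_succ' (Sm F) (k+1), isNice_Sm F i _, pd_Sm_pow i k, mul_smul_comm,
      ← mul_assoc, Sm_comm F (pd n i (Sm F)), mul_assoc, ← pow_succ']
    push_cast
    module

lemma pd_gexp (i : Fin n) :
    pd n i (gexp n (Sm F))
      = pd n i (Sm F) * (gexp n (Sm F) - ((n.factorial : ℂ))⁻¹ • Sm F ^ n) := by
  unfold gexp
  rw [map_sum, Finset.sum_range_succ']
  have h0 : pd n i ((Nat.factorial 0 : ℂ)⁻¹ • Sm F ^ 0) = 0 := by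
    simp [pd_one]
  rw [h0, add_zero]
  have hterm : ∀ k : ℕ, pd n i ((((k+1).factorial : ℕ) : ℂ)⁻¹ • Sm F ^ (k+1))
      = ((k.factorial : ℕ) : ℂ)⁻¹ • (pd n i (Sm F) * Sm F ^ k) := by
    intro k
    rw [map_smul, pd_Sm_pow F i k, smul_smul]
    congr 1
    have hk1 : ((k:ℂ)+1) ≠ 0 := by
      have : ((k+1 : ℕ) : ℂ) ≠ 0 := Nat.cast_ne_zero.mpr (Nat.succ_ne_zero k)
      push_cast at this; exact this
    have hk : (((k+1).factorial : ℕ) : ℂ) = ((k:ℂ)+1) * ((k.factorial : ℕ) : ℂ) := by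
      rw [Nat.factorial_succ]; push_cast; ring
    rw [hk, mul_inv, mul_right_comm, inv_mul_cancel₀ hk1, one_mul]
  rw [Finset.sum_congr rfl fun k _ => hterm k, Finset.sum_range_succ,
    add_sub_cancel_right, Finset.mul_sum]
  exact Finset.sum_congr rfl fun k _ => (mul_smul_comm _ _ _).symm

lemma A_mul_Spow_zero (i : Fin n) : (∑ j, F i j • θ n j) * Sm F ^ n = 0 := by
  have h1 : (∑ j, F i j • θ n j)
      ∈ LinearMap.range (ExteriorAlgebra.ι ℂ : (Fin n → ℂ) →ₗ[ℂ] Gr n) ^ 1 :=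
    Submodule.sum_mem _ fun j _ => Submodule.smul_mem _ _ (theta_mem j)
  have h2 := Submodule.mul_mem_mul h1 (Sm_pow_mem F n)
  rw [← pow_add, exteriorPower_eq_bot (1 + 2*n) (by omega)] at h2
  simpa using h2

lemma Sm_pow_succ_zero : Sm F ^ (n+1) = 0 := by
  have h := Sm_pow_mem F (n+1)
  rw [exteriorPower_eq_bot (2*(n+1)) (by omega)] at h
  simpa using h

end GaussAux

end Aux4

noncomputable section Aux5

namespace GaussAux

variable {n : ℕ} (F : Matrix (Fin n) (Fin n) ℂ)

lemma dF_gexp_zero (hF : F.transpose = -F) (i : Fin n) :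
    pd n i (gexp n (Sm F)) + (∑ j, F i j • θ n j) * gexp n (Sm F) = 0 := by
  rw [pd_gexp F i, pd_Sm F hF i, neg_mul, mul_sub, mul_smul_comm, A_mul_Spow_zero F i,
    smul_zero, sub_zero, neg_add_cancel]

lemma d_mul_gexp (hF : F.transpose = -F) (i : Fin n) (x : Gr n) :
    pd n i (gexp n (Sm F) * x) + (∑ j, F i j • θ n j) * (gexp n (Sm F) * x)
      = gexp n (Sm F) * pd n i x := by
  rw [isNice_gexp F i x, ← mul_assoc, add_right_comm, ← add_mul, dF_gexp_zero F hF i,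
    zero_mul, zero_add]

lemma gexp_isUnit : IsUnit (gexp n (Sm F)) := by
  have hg : gexp n (Sm F)
      = 1 + ∑ k ∈ Finset.range n, (((k+1).factorial : ℕ) : ℂ)⁻¹ • Sm F ^ (k+1) := by
    unfold gexp
    rw [Finset.sum_range_succ']
    simp [add_comm]
  have hfac : (∑ k ∈ Finset.range n, (((k+1).factorial : ℕ) : ℂ)⁻¹ • Sm F ^ (k+1))
      = Sm F * ∑ k ∈ Finset.range n, (((k+1).factorial : ℕ) : ℂ)⁻¹ • Sm F ^ k := by
    rw [Finset.mul_sum]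
    exact Finset.sum_congr rfl fun k _ => by rw [mul_smul_comm, ← pow_succ']
  rw [hg, hfac]
  apply IsNilpotent.isUnit_one_add
  refine ⟨n+1, ?_⟩
  have hcomm : Commute (Sm F) (∑ k ∈ Finset.range n, (((k+1).factorial : ℕ) : ℂ)⁻¹ • Sm F ^ k) :=
    Commute.sum_right _ _ _ fun k _ => ((Commute.refl (Sm F)).pow_right k).smul_right _
  rw [hcomm.mul_pow, Sm_pow_succ_zero, zero_mul]

lemma iota_eq_sum (v : Fin n → ℂ) : (∑ i, v i • θ n i) = ExteriorAlgebra.ι ℂ v := by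
  unfold θ
  calc (∑ i, v i • ExteriorAlgebra.ι ℂ (Pi.single i (1:ℂ)))
      = ∑ i, ExteriorAlgebra.ι ℂ (Pi.single i (v i)) := by
        refine Finset.sum_congr rfl fun i _ => ?_
        rw [← map_smul, ← Pi.single_smul, smul_eq_mul, mul_one]
    _ = ExteriorAlgebra.ι ℂ (∑ i, Pi.single i (v i)) := (map_sum _ _ _).symm
    _ = ExteriorAlgebra.ι ℂ v := by rw [Finset.univ_sum_single]

lemma numOp {k : ℕ} {x : Gr n}
    (hx : x ∈ LinearMap.range (ExteriorAlgebra.ι ℂ : (Fin n → ℂ) →ₗ[ℂ] Gr n) ^ k) :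
    (∑ i, θ n i * pd n i x) = (k:ℂ) • x := by
  induction hx using Submodule.pow_induction_on_left' with
  | algebraMap r => simp [pd_algebraMap]
  | add x y i hx hy ihx ihy =>
    rw [Finset.sum_congr rfl fun i _ => by rw [map_add, mul_add],
      Finset.sum_add_distrib, ihx, ihy, smul_add]
  | mem_mul m hm k x hx ih =>
    obtain ⟨v, rfl⟩ := hm
    have hterm : ∀ i, θ n i * pd n i (ExteriorAlgebra.ι ℂ v * x)
        = v i • (θ n i * x) + ExteriorAlgebra.ι ℂ v * (θ n i * pd n i x) := by
      intro i
      have hsw : θ n i * ExteriorAlgebra.ι ℂ v = -(ExteriorAlgebra.ι ℂ v * θ n i) :=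
        iota_swap _ _
      rw [pd_iota_mul, mul_sub, mul_smul_comm, ← mul_assoc, hsw, neg_mul, mul_assoc,
        sub_neg_eq_add]
    rw [Finset.sum_congr rfl fun i _ => hterm i, Finset.sum_add_distrib, ← Finset.mul_sum, ih,
      Finset.sum_congr rfl fun i (_ : i ∈ Finset.univ) => (smul_mul_assoc (v i) (θ n i) x).symm,
      ← Finset.sum_mul, iota_eq_sum, mul_smul_comm]
    push_cast
    module

end GaussAux

end Aux5

noncomputable section Aux6

namespace GaussAux

variable {n : ℕ} (F : Matrix (Fin n) (Fin n) ℂ)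

lemma sum_smul_mul (i : Fin n) (x : Gr n) :
    (∑ j, F i j • (θ n j * x)) = (∑ j, F i j • θ n j) * x := by
  rw [Finset.sum_mul]
  exact Finset.sum_congr rfl fun j _ => (smul_mul_assoc _ _ _).symm

set_option maxHeartbeats 1000000 in
set_option synthInstance.maxHeartbeats 500000 in
lemma eq_smul_one_of_pd_zero {x : Gr n} (hx : ∀ i, pd n i x = 0) : ∃ c : ℂ, x = c • 1 := by
  classical
  set ℳ : ℕ → Submodule ℂ (Gr n) := fun k => ⋀[ℂ]^k (Fin n → ℂ) with hM
  have hN : (∑ i, θ n i * pd n i x) = 0 := by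
    refine Finset.sum_eq_zero fun i _ => ?_
    rw [hx i, mul_zero]
  set s := (DirectSum.decompose ℳ x).support with hs
  have hdec : (∑ k ∈ s, (DirectSum.decompose ℳ x k : Gr n)) = x :=
    DirectSum.sum_support_decompose ℳ x
  have hsum : (∑ k ∈ s, (k:ℂ) • (DirectSum.decompose ℳ x k : Gr n)) = 0 := by
    calc (∑ k ∈ s, (k:ℂ) • (DirectSum.decompose ℳ x k : Gr n))
        = ∑ k ∈ s, ∑ i, θ n i * pd n i (DirectSum.decompose ℳ x k : Gr n) := by
          refine Finset.sum_congr rfl fun k _ => ?_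
          exact (numOp (DirectSum.decompose ℳ x k).2).symm
      _ = ∑ i, θ n i * pd n i (∑ k ∈ s, (DirectSum.decompose ℳ x k : Gr n)) := by
          rw [Finset.sum_comm]
          refine Finset.sum_congr rfl fun i _ => ?_
          rw [map_sum, Finset.mul_sum]
      _ = 0 := by rw [hdec]; exact hN
  have hzero : ∀ j : ℕ, j ≠ 0 → (DirectSum.decompose ℳ x j : Gr n) = 0 := by
    intro j hj
    have h1 := congrArg (fun y => (DirectSum.decompose ℳ y j : Gr n)) hsum
    simp only [DirectSum.decompose_sum, DFinsupp.finset_sum_apply, AddSubmonoidClass.coe_finset_sum,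
      DirectSum.decompose_zero, DirectSum.zero_apply, ZeroMemClass.coe_zero] at h1
    rw [DFinsupp.finset_sum_apply, AddSubmonoidClass.coe_finset_sum] at h1
    have hterm : ∀ k ∈ s,
        ((DirectSum.decompose ℳ ((k:ℂ) • (DirectSum.decompose ℳ x k : Gr n)) j : ℳ j) : Gr n)
          = if k = j then (k:ℂ) • (DirectSum.decompose ℳ x k : Gr n) else 0 := by
      intro k _
      have hmem : (k:ℂ) • (DirectSum.decompose ℳ x k : Gr n) ∈ ℳ k :=
        Submodule.smul_mem _ _ (DirectSum.decompose ℳ x k).2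
      split
      next h => subst h; exact DirectSum.decompose_of_mem_same ℳ hmem
      next h => exact DirectSum.decompose_of_mem_ne ℳ hmem h
    rw [Finset.sum_congr rfl hterm, Finset.sum_ite_eq' s j] at h1
    by_cases hjs : j ∈ s
    · rw [if_pos hjs] at h1
      have hj' : (j:ℂ) ≠ 0 := Nat.cast_ne_zero.mpr hj
      rcases smul_eq_zero.mp h1 with h | h
      · exact absurd h hj'
      · exact h
    · have := DFinsupp.notMem_support_iff.mp hjs
      rw [this]; rfl
  have hx0 : x = (DirectSum.decompose ℳ x 0 : Gr n) := by
    conv_lhs => rw [← hdec]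
    exact Finset.sum_eq_single 0 (fun k _ hk => hzero k hk)
      (fun h0 => by rw [DFinsupp.notMem_support_iff.mp h0]; rfl)
  have hmem0 : x ∈ (LinearMap.range (ExteriorAlgebra.ι ℂ : (Fin n → ℂ) →ₗ[ℂ] Gr n)) ^ 0 := by
    rw [hx0]; exact (DirectSum.decompose ℳ x 0).2
  rw [pow_zero] at hmem0
  obtain ⟨c, hc⟩ := Submodule.mem_one.mp hmem0
  exact ⟨c, by rw [← hc, Algebra.algebraMap_eq_smul_one]⟩

end GaussAux

end Aux6

open GaussAux in
theorem gaussian_spans_nullspace' (n : ℕ) (F : Matrix (Fin n) (Fin n) ℂ)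
    (hF : F.transpose = -F) :
    {x : Gr n | ∀ i, (pd n i) x + ∑ j, F i j • (θ n j * x) = 0}
      = (Submodule.span ℂ {gexp n (-(1/2 : ℂ) • ∑ i, ∑ j, F i j • (θ n i * θ n j))} :
          Submodule ℂ (Gr n)) := by
  have hSm : (-(1/2 : ℂ) • ∑ i, ∑ j, F i j • (θ n i * θ n j)) = Sm F := rfl
  ext x
  rw [Set.mem_setOf_eq, SetLike.mem_coe, hSm, Submodule.mem_span_singleton]
  constructor
  · intro hx
    obtain ⟨u, hu⟩ := gexp_isUnit F
    have hgy : gexp n (Sm F) * (↑u⁻¹ * x) = x := by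
      rw [← mul_assoc, ← hu, Units.mul_inv, one_mul]
    have hpdy : ∀ i, pd n i (↑u⁻¹ * x) = 0 := by
      intro i
      have h2 := d_mul_gexp F hF i (↑u⁻¹ * x)
      rw [hgy] at h2
      have h3 := hx i
      rw [sum_smul_mul] at h3
      rw [h3, ← hu] at h2
      calc pd n i (↑u⁻¹ * x) = ↑u⁻¹ * (↑u * pd n i (↑u⁻¹ * x)) := by
            rw [← mul_assoc, Units.inv_mul, one_mul]
        _ = 0 := by rw [← h2, mul_zero]
    obtain ⟨c, hc⟩ := eq_smul_one_of_pd_zero hpdy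
    refine ⟨c, ?_⟩
    rw [← hgy, hc, mul_smul_comm, mul_one]
  · rintro ⟨c, rfl⟩ i
    rw [sum_smul_mul, map_smul, mul_smul_comm, ← smul_add, dF_gexp_zero F hF i, smul_zero]


/-- The simultaneous nullspace of the operators `∂ᵢ + Σⱼ Fᵢⱼθⱼ` (for skew-symmetric `F`) is
exactly the one-dimensional span of the Grassmann–Gaussian exponential `exp(-½ θᵀFθ)`. -/
theorem gaussian_spans_nullspace (n : ℕ) (F : Matrix (Fin n) (Fin n) ℂ)
    (hF : F.transpose = -F) :
    {x : Gr n | ∀ i, (pd n i) x + ∑ j, F i j • (θ n j * x) = 0}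
      = (Submodule.span ℂ {gexp n (-(1/2 : ℂ) • ∑ i, ∑ j, F i j • (θ n i * θ n j))} :
          Submodule ℂ (Gr n)) :=
  gaussian_spans_nullspace' n F hF
end

section
/- With notation as above, writing Q = -θᵀFθ for an antisymmetric matrix F, if the column β = (β₁,…,βₙ)ᵀ satisfies (Σₜβₜ∂ₜ)exp(Q) = 0, then Fβ = 0. -/
lemma contract_grade (n : ℕ) (d : Module.Dual ℂ (Fin n → ℂ)) (m : ℕ)
    (x : ExteriorAlgebra ℂ (Fin n → ℂ)) (hx : x ∈ ⋀[ℂ]^m (Fin n → ℂ)) :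
    (CliffordAlgebra.contractLeft (Q := (0 : QuadraticForm ℂ (Fin n → ℂ))) d) x
      ∈ ⋀[ℂ]^(m-1) (Fin n → ℂ) ∧
      (m = 0 → (CliffordAlgebra.contractLeft (Q := (0 : QuadraticForm ℂ (Fin n → ℂ))) d) x = 0) := by
  induction hx using Submodule.pow_induction_on_left' with
  | algebraMap r =>
      refine ⟨?_, fun _ => ?_⟩ <;> simp [CliffordAlgebra.contractLeft_algebraMap]
  | add x y i hx hy ihx ihy =>
      refine ⟨by simpa using add_mem ihx.1 ihy.1, fun hi => by simp [ihx.2 hi, ihy.2 hi]⟩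
  | mem_mul v hv i x hx ih =>
      obtain ⟨w, rfl⟩ := hv
      refine ⟨?_, fun hi => by omega⟩
      rw [show ((ExteriorAlgebra.ι ℂ) w * x) = (CliffordAlgebra.ι 0 w * x) from rfl,
        CliffordAlgebra.contractLeft_ι_mul]
      refine sub_mem (Submodule.smul_mem _ _ ?_) ?_
      · simpa using hx
      · rcases Nat.eq_zero_or_pos i with hi | hi
        · simp [ih.2 hi]
        · have : (1 : ℕ) + (i - 1) = i + 1 - 1 := by omega
          have h2 : CliffordAlgebra.ι (0 : QuadraticForm ℂ (Fin n → ℂ)) w *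
              (CliffordAlgebra.contractLeft d) x ∈
              (LinearMap.range (ExteriorAlgebra.ι ℂ (M := Fin n → ℂ))) ^ 1 *
              (LinearMap.range (ExteriorAlgebra.ι ℂ (M := Fin n → ℂ))) ^ (i - 1) := by
            exact Submodule.mul_mem_mul (by simpa [pow_one] using LinearMap.mem_range_self _ w) ih.1
          rw [← pow_add] at h2
          simpa [this] using h2


lemma pd_mul_θ (n : ℕ) (t i j : Fin n) :
    pd n t (θ n i * θ n j) =
      (if t = i then (1:ℂ) else 0) • θ n j - (if t = j then (1:ℂ) else 0) • θ n i := by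
  rw [pd, θ, θ]
  rw [show ((ExteriorAlgebra.ι ℂ) (Pi.single i 1 : Fin n → ℂ) * (ExteriorAlgebra.ι ℂ) (Pi.single j 1)) = (CliffordAlgebra.ι 0 (Pi.single i 1 : Fin n → ℂ) * (ExteriorAlgebra.ι ℂ) (Pi.single j 1)) from rfl]
  rw [CliffordAlgebra.contractLeft_ι_mul, CliffordAlgebra.contractLeft_ι _ _ (Pi.single j 1)]
  simp [Pi.single_apply, θ, Algebra.algebraMap_eq_smul_one, mul_comm]

lemma DQ (n : ℕ) (F : Matrix (Fin n) (Fin n) ℂ) (hF : F.transpose = -F) (β : Fin n → ℂ) :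
    (∑ t, β t • pd n t) (-(∑ i, ∑ j, F i j • (θ n i * θ n j))) =
      (2:ℂ) • ExteriorAlgebra.ι ℂ (F.mulVec β) := by
  have hF' : ∀ i j, F j i = -F i j := fun i j => by
    have := congrFun (congrFun hF i) j
    simpa [Matrix.transpose_apply] using this
  have hι : ExteriorAlgebra.ι ℂ (F.mulVec β) = ∑ j, (F.mulVec β j) • θ n j := by
    rw [show (F.mulVec β) = ∑ j, (F.mulVec β j) • (Pi.single j 1 : Fin n → ℂ) by
      simp [← Pi.single_smul, Finset.univ_sum_single]]
    simp [θ, Pi.single_apply, mul_ite]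
  rw [hι]
  simp only [LinearMap.coe_sum, Finset.sum_apply, LinearMap.smul_apply, map_neg, map_sum,
    map_smul, pd_mul_θ, smul_sub, smul_smul, Finset.smul_sum, ite_smul, zero_smul,
    Finset.sum_sub_distrib, Finset.sum_ite_eq, Finset.mem_univ, if_true]
  rw [Finset.sum_comm (s := Finset.univ) (t := Finset.univ)]
  simp only [Matrix.mulVec, dotProduct]
  rw [← Finset.sum_sub_distrib]
  simp only [one_smul, smul_ite, smul_zero, Finset.sum_ite_eq', Finset.mem_univ, if_true,
    ← Finset.sum_smul]
  rw [← Finset.sum_neg_distrib]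
  refine Finset.sum_congr rfl fun x _ => ?_
  have hc : (∑ x1, F x1 x * β x1) = -(∑ x1, F x x1 * β x1) := by
    rw [← Finset.sum_neg_distrib]
    exact Finset.sum_congr rfl fun i _ => by rw [hF']; ring
  rw [hc]
  module

/-- If `(Σₜ βₜ∂ₜ) exp(-θᵀFθ) = 0` for a skew-symmetric matrix `F`, then `Fβ = 0`. -/
theorem mulVec_eq_zero_of_deriv_gaussian_eq_zero (n : ℕ)
    (F : Matrix (Fin n) (Fin n) ℂ) (hF : F.transpose = -F) (β : Fin n → ℂ)
    (h : (∑ t, β t • pd n t) (gexp n (-(∑ i, ∑ j, F i j • (θ n i * θ n j)))) = 0) :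
    F.mulVec β = 0 := by
  rcases Nat.eq_zero_or_pos n with hn | hn
  · subst hn; funext i; exact i.elim0
  set Q : Gr n := -(∑ i, ∑ j, F i j • (θ n i * θ n j)) with hQdef
  have hQ2 : Q ∈ ⋀[ℂ]^2 (Fin n → ℂ) := by
    refine neg_mem (Submodule.sum_mem _ fun i _ => Submodule.sum_mem _ fun j _ =>
      Submodule.smul_mem _ _ ?_)
    show θ n i * θ n j ∈ (LinearMap.range (ExteriorAlgebra.ι ℂ (M := Fin n → ℂ))) ^ 2
    rw [pow_two]
    exact Submodule.mul_mem_mul ⟨_, rfl⟩ ⟨_, rfl⟩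
  have hQk : ∀ k, Q ^ k ∈ ⋀[ℂ]^(2*k) (Fin n → ℂ) := fun k => by
    have := Submodule.pow_mem_pow _ hQ2 k
    rwa [← pow_mul] at this
  set D : Module.End ℂ (Gr n) := ∑ t, β t • pd n t with hDdef
  have hDmem : ∀ k, D (Q ^ k) ∈ ⋀[ℂ]^(2*k-1) (Fin n → ℂ) := fun k => by
    rw [hDdef]
    simp only [LinearMap.coe_sum, Finset.sum_apply, LinearMap.smul_apply]
    exact Submodule.sum_mem _ fun t _ => Submodule.smul_mem _ _
      (contract_grade n _ (2*k) _ (hQk k)).1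
  have hD1 : D (Q ^ 0) = 0 := by
    rw [hDdef]
    simp only [LinearMap.coe_sum, Finset.sum_apply, LinearMap.smul_apply]
    refine Finset.sum_eq_zero fun t _ => ?_
    have h0 : (pd n t) (Q ^ 0) = 0 := (contract_grade n _ 0 _ (hQk 0)).2 rfl
    rw [h0, smul_zero]
  set π := GradedAlgebra.proj (fun i : ℕ => ⋀[ℂ]^i (Fin n → ℂ)) 1 with hπ
  have hproj : π (D (gexp n Q)) = D Q := by
    rw [gexp, map_sum, map_sum]
    rw [Finset.sum_eq_single 1]
    · have hm : D (Q ^ 1) ∈ ⋀[ℂ]^1 (Fin n → ℂ) := hDmem 1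
      have hval : π (D (Q ^ 1)) = D (Q ^ 1) := by
        rw [hπ, GradedAlgebra.proj_apply,
          DirectSum.decompose_of_mem_same (fun i : ℕ => ⋀[ℂ]^i (Fin n → ℂ)) hm]
      rw [D.map_smul, π.map_smul, hval, pow_one]
      norm_num
    · intro k hk hk1
      rcases Nat.eq_zero_or_pos k with rfl | hkpos
      · rw [D.map_smul, hD1, smul_zero, map_zero]
      · have h2 : 2*k-1 ≠ 1 := by omega
        have hval : π (D (Q ^ k)) = 0 := by
          rw [hπ, GradedAlgebra.proj_apply]
          exact DirectSum.decompose_of_mem_ne (fun i : ℕ => ⋀[ℂ]^i (Fin n → ℂ)) (hDmem k) h2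
        rw [D.map_smul, π.map_smul, hval, smul_zero]
    · intro habs
      exact absurd (Finset.mem_range.mpr (by omega)) habs
  rw [h, map_zero] at hproj
  have hDQ : D Q = 0 := hproj.symm
  rw [hDdef, hQdef] at hDQ
  rw [DQ n F hF β] at hDQ
  have hι0 : ExteriorAlgebra.ι ℂ (F.mulVec β) = 0 :=
    (smul_eq_zero.mp hDQ).resolve_left two_ne_zero
  exact (ExteriorAlgebra.ι_eq_zero_iff _).mp hι0
end
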